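/- Let a > 0 and define F_a : ℝ³ ∖ {0} → ℝ by F_a(v) = √(|v|⁴ + 16πa|v|²) − |v|² − 8πa + (8πa)²/(2|v|²). Then there exists a constant C > 0 (depending only on a) such that for all v ∈ ℝ³ with v ≠ 0: (i) |F_a(v)| ≤ C·min(|v|^{−2}, |v|^{−4}); (ii) F_a is differentiable at v and |∇F_a(v)| ≤ C·|v|^{−3}·(1 + |v|²)^{−1}. -/

import Mathlib

/-- The Lee–Huang–Yang integrand
`F_a(v) = √(|v|⁴ + 16πa|v|²) − |v|² − 8πa + (8πa)²/(2|v|²)`. -/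
noncomputable def LHY (a : ℝ) (v : EuclideanSpace ℝ (Fin 3)) : ℝ :=
  Real.sqrt (‖v‖ ^ 4 + 16 * Real.pi * a * ‖v‖ ^ 2) - ‖v‖ ^ 2 - 8 * Real.pi * a
    + (8 * Real.pi * a) ^ 2 / (2 * ‖v‖ ^ 2)

/-- The 1-dimensional profile of the LHY integrand: `F_a(v) = lhyF (8πa) (‖v‖²)`. -/
noncomputable def lhyF (c t : ℝ) : ℝ :=
  Real.sqrt (t ^ 2 + 2 * c * t) - t - c + c ^ 2 / (2 * t)

lemma lhyF_hasDerivAt (c t : ℝ) (hc : 0 < c) (ht : 0 < t) :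
    HasDerivAt (lhyF c)
      ((t + c) / Real.sqrt (t ^ 2 + 2 * c * t) - 1 - c ^ 2 / (2 * t ^ 2)) t := by
  have hspos : 0 < Real.sqrt (t ^ 2 + 2 * c * t) := Real.sqrt_pos.2 (by positivity)
  have h0 : HasDerivAt (fun t : ℝ => t ^ 2 + 2 * c * t) (2 * t + 2 * c) t := by
    have h := (hasDerivAt_pow 2 t).add ((hasDerivAt_id' (𝕜 := ℝ) t).const_mul (2 * c))
    refine h.congr_deriv ?_
    push_cast; ring
  have hs : HasDerivAt (fun t : ℝ => Real.sqrt (t ^ 2 + 2 * c * t))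
      (1 / (2 * Real.sqrt (t ^ 2 + 2 * c * t)) * (2 * t + 2 * c)) t :=
    (Real.hasDerivAt_sqrt (by positivity)).comp t h0
  have hinv : HasDerivAt (fun t : ℝ => c ^ 2 / (2 * t)) (c ^ 2 / 2 * (-(t ^ 2)⁻¹)) t := by
    have h := (hasDerivAt_inv ht.ne').const_mul (c ^ 2 / 2)
    have he : (fun t : ℝ => c ^ 2 / (2 * t)) = fun t : ℝ => c ^ 2 / 2 * t⁻¹ := by
      funext x; ring
    rw [he]; exact h
  have h := ((hs.sub (hasDerivAt_id' (𝕜 := ℝ) t)).sub_const c).add hinv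
  have hfun : lhyF c = fun t : ℝ =>
      Real.sqrt (t ^ 2 + 2 * c * t) - t - c + c ^ 2 / (2 * t) := rfl
  rw [hfun]
  refine h.congr_deriv ?_
  field_simp
  ring

lemma lhyF_bounds (c t : ℝ) (hc : 0 < c) (ht : 0 < t) :
    0 < lhyF c t ∧ lhyF c t ≤ c ^ 2 / t ∧ lhyF c t ≤ c ^ 3 / t ^ 2 := by
  set s : ℝ := Real.sqrt (t ^ 2 + 2 * c * t) with hs_def
  have hs2 : s ^ 2 = t ^ 2 + 2 * c * t := Real.sq_sqrt (by positivity)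
  have hspos : 0 < s := Real.sqrt_pos.2 (by positivity)
  have hst : t ≤ s := by nlinarith [hs2, hspos]
  have hstc : s ≤ t + c := by nlinarith [hs2, hspos]
  have key : (t + c - s) * (s + t + c) = c ^ 2 := by linear_combination (-1 : ℝ) * hs2
  have hstc_pos : 0 < s + t + c := by linarith
  have hform : lhyF c t = c ^ 2 / (2 * t) - c ^ 2 / (s + t + c) := by
    have h1 : c ^ 2 / (s + t + c) = t + c - s := by
      rw [div_eq_iff hstc_pos.ne', ← key]
    rw [h1]; unfold lhyF; rw [← hs_def]; ring
  have h2t : (0:ℝ) < 2 * t := by linarith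
  have hlt : 2 * t < s + t + c := by linarith
  refine ⟨?_, ?_, ?_⟩
  · rw [hform, sub_pos]
    exact div_lt_div_of_pos_left (by positivity) h2t hlt
  · rw [hform]
    have h3 : c ^ 2 / (2 * t) ≤ c ^ 2 / t := by gcongr; linarith
    have h4 : 0 < c ^ 2 / (s + t + c) := by positivity
    linarith
  · rw [hform, div_sub_div _ _ h2t.ne' hstc_pos.ne', div_le_div_iff₀ (by positivity) (by positivity)]
    nlinarith [mul_le_mul_of_nonneg_left (show s - t ≤ c by linarith)
        (show (0:ℝ) ≤ c ^ 2 * t ^ 2 by positivity),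
      mul_le_mul_of_nonneg_left hst (show (0:ℝ) ≤ 2 * c ^ 3 * t by positivity),
      mul_pos hc ht, mul_pos (mul_pos hc hc) ht]

lemma lhyF_deriv_bound (c t : ℝ) (hc : 0 < c) (ht : 0 < t) :
    |(t + c) / Real.sqrt (t ^ 2 + 2 * c * t) - 1 - c ^ 2 / (2 * t ^ 2)| ≤
      (c ^ 2 + 2 * c ^ 3 + 2 * c ^ 4) / (t ^ 2 * (1 + t)) := by
  set s : ℝ := Real.sqrt (t ^ 2 + 2 * c * t) with hs_def
  have hs2 : s ^ 2 = t ^ 2 + 2 * c * t := Real.sq_sqrt (by positivity)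
  have hspos : 0 < s := Real.sqrt_pos.2 (by positivity)
  have hst : t ≤ s := by nlinarith [hs2, hspos]
  have hstc : s ≤ t + c := by nlinarith [hs2, hspos]
  have key : (t + c - s) * (s + t + c) = c ^ 2 := by linear_combination (-1 : ℝ) * hs2
  have hstc_pos : 0 < s + t + c := by linarith
  set P : ℝ := s * (s + t + c) with hP_def
  have hP_pos : 0 < P := mul_pos hspos hstc_pos
  have hP_lb : 2 * t ^ 2 + c * t ≤ P := by nlinarith [hs2, hst, hstc]
  have hP_ub : P ≤ 2 * t ^ 2 + 4 * c * t + c ^ 2 := by nlinarith [hs2, hst, hstc]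
  have hA : (t + c) / s - 1 = c ^ 2 / P := by
    rw [div_sub_one hspos.ne', div_eq_div_iff hspos.ne' hP_pos.ne']
    rw [hP_def]; linear_combination s * key
  rw [hA]
  have hDneg : c ^ 2 / P - c ^ 2 / (2 * t ^ 2) ≤ 0 := by
    have : c ^ 2 / P ≤ c ^ 2 / (2 * t ^ 2) :=
      div_le_div_of_nonneg_left (by positivity) (by positivity)
        (by nlinarith [mul_pos hc ht])
    linarith
  rw [abs_of_nonpos hDneg, neg_sub]
  rcases le_total t 1 with ht1 | ht1
  · have h1 : c ^ 2 / (2 * t ^ 2) - c ^ 2 / P ≤ c ^ 2 / (2 * t ^ 2) := by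
      have : 0 < c ^ 2 / P := by positivity
      linarith
    have h2 : c ^ 2 / (2 * t ^ 2) ≤ (c ^ 2 + 2 * c ^ 3 + 2 * c ^ 4) / (t ^ 2 * (1 + t)) := by
      rw [div_le_div_iff₀ (by positivity) (by positivity)]
      nlinarith [sq_nonneg t, mul_pos ht ht, pow_pos hc 2, pow_pos hc 3, pow_pos hc 4,
        mul_le_mul_of_nonneg_left ht1 (show (0:ℝ) ≤ c ^ 2 * t ^ 2 by positivity)]
    linarith
  · have h1 : c ^ 2 / (2 * t ^ 2) - c ^ 2 / P
        = c ^ 2 * (P - 2 * t ^ 2) / (2 * t ^ 2 * P) := by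
      field_simp
    rw [h1]
    have h2 : c ^ 2 * (P - 2 * t ^ 2) / (2 * t ^ 2 * P)
        ≤ (2 * c ^ 3 + 2 * c ^ 4) / (t ^ 2 * (1 + t)) := by
      rw [div_le_div_iff₀ (by positivity) (by positivity)]
      have e1 : P - 2 * t ^ 2 ≤ 4 * c * t + c ^ 2 := by linarith
      have e2 : 1 + t ≤ 2 * t := by linarith
      have e3 : t ^ 3 ≤ t ^ 4 := by
        nlinarith [mul_le_mul_of_nonneg_left ht1 (le_of_lt (pow_pos ht 3))]
      nlinarith [mul_le_mul_of_nonneg_left e1 (show (0:ℝ) ≤ c ^ 2 * (t ^ 2 * (2 * t)) by positivity),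
        mul_le_mul_of_nonneg_left e2 (show (0:ℝ) ≤ c ^ 2 * (P - 2 * t ^ 2) * t ^ 2 by
          nlinarith [mul_le_mul_of_nonneg_left hP_lb (show (0:ℝ) ≤ c ^ 2 * t ^ 2 by positivity),
            mul_pos (pow_pos hc 3) (pow_pos ht 3)]),
        mul_le_mul_of_nonneg_left hP_lb (show (0:ℝ) ≤ (2 * c ^ 3 + 2 * c ^ 4) * t ^ 2 by positivity),
        mul_le_mul_of_nonneg_left e3 (show (0:ℝ) ≤ 2 * c ^ 4 by positivity),
        mul_pos hc ht, pow_pos ht 2, pow_pos ht 3, pow_pos ht 4]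
    have h3 : (2 * c ^ 3 + 2 * c ^ 4) / (t ^ 2 * (1 + t))
        ≤ (c ^ 2 + 2 * c ^ 3 + 2 * c ^ 4) / (t ^ 2 * (1 + t)) :=
      by gcongr; linarith [pow_pos hc 2]
    linarith

lemma lhy_eq (a : ℝ) (v : EuclideanSpace ℝ (Fin 3)) :
    LHY a v = lhyF (8 * Real.pi * a) (‖v‖ ^ 2) := by
  have h : (‖v‖ ^ 2) ^ 2 + 2 * (8 * Real.pi * a) * ‖v‖ ^ 2
      = ‖v‖ ^ 4 + 16 * Real.pi * a * ‖v‖ ^ 2 := by ring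
  simp only [LHY, lhyF, h]

set_option synthInstance.maxHeartbeats 1000000 in
/-- **Pointwise and gradient bounds on the LHY integrand** (end of Section 3):
for `v ≠ 0`, `|F_a(v)| ≤ C·min(|v|^{−2}, |v|^{−4})`, `F_a` is differentiable at `v`, and
`|∇F_a(v)| ≤ C·|v|^{−3}(1+|v|²)^{−1}`. -/
theorem lhy_pointwise_bounds (a : ℝ) (ha : 0 < a) :
    ∃ C > 0, ∀ v : EuclideanSpace ℝ (Fin 3), v ≠ 0 →
      |LHY a v| ≤ C * min (‖v‖ ^ (-(2 : ℝ))) (‖v‖ ^ (-(4 : ℝ))) ∧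
      DifferentiableAt ℝ (LHY a) v ∧
      ‖fderiv ℝ (LHY a) v‖ ≤ C * ‖v‖ ^ (-(3 : ℝ)) * (1 + ‖v‖ ^ 2)⁻¹ := by
  have hc : 0 < 8 * Real.pi * a := by positivity
  set c : ℝ := 8 * Real.pi * a with hc_def
  refine ⟨c ^ 2 + c ^ 3 + 2 * (c ^ 2 + 2 * c ^ 3 + 2 * c ^ 4), by positivity, ?_⟩
  set C : ℝ := c ^ 2 + c ^ 3 + 2 * (c ^ 2 + 2 * c ^ 3 + 2 * c ^ 4) with hC_def
  intro v hv
  have hr : 0 < ‖v‖ := norm_pos_iff.2 hv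
  have ht : 0 < ‖v‖ ^ 2 := by positivity
  -- rpow conversions
  have hp2 : ‖v‖ ^ (-(2:ℝ)) = (‖v‖ ^ 2)⁻¹ := by
    rw [show (-(2:ℝ)) = -((2:ℕ):ℝ) by norm_num, Real.rpow_neg (norm_nonneg v),
      Real.rpow_natCast]
  have hp4 : ‖v‖ ^ (-(4:ℝ)) = (‖v‖ ^ 4)⁻¹ := by
    rw [show (-(4:ℝ)) = -((4:ℕ):ℝ) by norm_num, Real.rpow_neg (norm_nonneg v),
      Real.rpow_natCast]
  have hp3 : ‖v‖ ^ (-(3:ℝ)) = (‖v‖ ^ 3)⁻¹ := by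
    rw [show (-(3:ℝ)) = -((3:ℕ):ℝ) by norm_num, Real.rpow_neg (norm_nonneg v),
      Real.rpow_natCast]
  -- the function equality
  have hLHY : LHY a = fun w : EuclideanSpace ℝ (Fin 3) => lhyF c (‖w‖ ^ 2) := by
    funext w; exact lhy_eq a w
  -- derivative data
  have hg : HasFDerivAt (fun w : EuclideanSpace ℝ (Fin 3) => ‖w‖ ^ 2)
      (2 • (innerSL ℝ v)) v := (hasStrictFDerivAt_norm_sq v).hasFDerivAt
  have hd := lhyF_hasDerivAt c (‖v‖ ^ 2) hc ht
  have hF : HasFDerivAt (LHY a)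
      (((‖v‖ ^ 2 + c) / Real.sqrt ((‖v‖ ^ 2) ^ 2 + 2 * c * ‖v‖ ^ 2) - 1
          - c ^ 2 / (2 * (‖v‖ ^ 2) ^ 2)) • (2 • (innerSL ℝ v))) v := by
    rw [hLHY]
    exact hd.comp_hasFDerivAt v hg
  obtain ⟨hpos, hub1, hub2⟩ := lhyF_bounds c (‖v‖ ^ 2) hc ht
  have hCb : c ^ 2 ≤ C ∧ c ^ 3 ≤ C ∧ 2 * (c ^ 2 + 2 * c ^ 3 + 2 * c ^ 4) ≤ C := by
    refine ⟨?_, ?_, ?_⟩ <;> nlinarith [pow_pos hc 2, pow_pos hc 3, pow_pos hc 4]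
  refine ⟨?_, hF.differentiableAt, ?_⟩
  · -- pointwise bound
    rw [hLHY, abs_of_pos hpos]
    rcases le_total (‖v‖ ^ (-(2:ℝ))) (‖v‖ ^ (-(4:ℝ))) with hm | hm
    · rw [min_eq_left hm, hp2]
      calc lhyF c (‖v‖ ^ 2) ≤ c ^ 2 / ‖v‖ ^ 2 := hub1
        _ = c ^ 2 * (‖v‖ ^ 2)⁻¹ := by rw [div_eq_mul_inv]
        _ ≤ C * (‖v‖ ^ 2)⁻¹ := by gcongr; exact hCb.1
    · rw [min_eq_right hm, hp4]
      calc lhyF c (‖v‖ ^ 2) ≤ c ^ 3 / (‖v‖ ^ 2) ^ 2 := hub2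
        _ = c ^ 3 * (‖v‖ ^ 4)⁻¹ := by rw [div_eq_mul_inv]; ring_nf
        _ ≤ C * (‖v‖ ^ 4)⁻¹ := by gcongr; exact hCb.2.1
  · -- gradient bound
    rw [hF.fderiv, hp3]
    have hGn : ‖(2 • (innerSL ℝ v) : EuclideanSpace ℝ (Fin 3) →L[ℝ] ℝ)‖ ≤ 2 * ‖v‖ := by
      rw [two_smul]
      calc ‖innerSL ℝ v + innerSL ℝ v‖ ≤ ‖innerSL ℝ v‖ + ‖innerSL ℝ v‖ := norm_add_le _ _
        _ = 2 * ‖v‖ := by rw [innerSL_apply_norm]; ring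
    have hDb := lhyF_deriv_bound c (‖v‖ ^ 2) hc ht
    set D : ℝ := (‖v‖ ^ 2 + c) / Real.sqrt ((‖v‖ ^ 2) ^ 2 + 2 * c * ‖v‖ ^ 2) - 1
          - c ^ 2 / (2 * (‖v‖ ^ 2) ^ 2) with hD_def
    calc ‖D • (2 • (innerSL ℝ v))‖ = |D| * ‖2 • (innerSL ℝ v)‖ :=
          (norm_smul D (2 • (innerSL ℝ v))).trans (by rw [Real.norm_eq_abs])
      _ ≤ ((c ^ 2 + 2 * c ^ 3 + 2 * c ^ 4) / ((‖v‖ ^ 2) ^ 2 * (1 + ‖v‖ ^ 2))) * (2 * ‖v‖) := by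
          apply mul_le_mul hDb hGn (by positivity) (by positivity)
      _ = 2 * (c ^ 2 + 2 * c ^ 3 + 2 * c ^ 4) * (‖v‖ ^ 3)⁻¹ * (1 + ‖v‖ ^ 2)⁻¹ := by
          field_simp
      _ ≤ C * (‖v‖ ^ 3)⁻¹ * (1 + ‖v‖ ^ 2)⁻¹ := by
          gcongr
          exact hCb.2.2
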